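/- Let $T$ be the invertible operator on $\ell^2(V)$, $V = \mathbb{Z} \cup (\mathbb{N} \times \mathbb{Z})$, from the invertible counterexample construction. If $f \in \ell^2(V)$ has $f(-k_0,j_0) \ne 0$ for some $(k_0,j_0) \in \mathbb{N} \times \mathbb{Z}$ and the branch weights satisfy $\sum_{j \ge 1} |\lambda_{(-k_0,1)} \cdots \lambda_{(-k_0,j)}| < \infty$ or $\sum_{j \ge 1} |\lambda_{(-k_0,-(j-1))} \cdots \lambda_{(-k_0,0)}|^{-1} < \infty$, then $f$ is not chain recurrent for $T$. -/

import Mathlib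

/-- A δ-chain for `T` from `f` to `g`: a finite sequence `(u l)_{l=0}^m`, `m ≥ 1`,
with `u 0 = f`, `u m = g`, and `‖u l - T (u (l-1))‖ < δ` for `1 ≤ l ≤ m`. -/
def IsDeltaChain {X : Type*} [NormedAddCommGroup X] [NormedSpace ℂ X]
    (T : X →L[ℂ] X) (δ : ℝ) (f g : X) : Prop :=
  ∃ (m : ℕ) (u : ℕ → X), 1 ≤ m ∧ u 0 = f ∧ u m = g ∧
    ∀ l, 1 ≤ l → l ≤ m → ‖u l - T (u (l - 1))‖ < δ

/-- `f` is a chain recurrent vector for `T`. -/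
def ChainRecVec {X : Type*} [NormedAddCommGroup X] [NormedSpace ℂ X]
    (T : X →L[ℂ] X) (f : X) : Prop :=
  ∀ δ : ℝ, 0 < δ → IsDeltaChain T δ f f

open scoped ENNReal

/-- The tree `V = ℤ ∪ {(-k, j) : k ∈ ℕ, k ≥ 1, j ∈ ℤ}` of the invertible construction. -/
abbrev TreeV2 : Type := ℤ ⊕ (ℕ+ × ℤ)

/-- The canonical unit vectors of `ℓ²(V)`. -/
noncomputable def eW (v : TreeV2) : lp (fun _ : TreeV2 => ℂ) 2 := lp.single 2 v 1

/-! ### Auxiliary lemmas -/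

lemma lp_smul_apply (c : ℂ) (x : lp (fun _ : TreeV2 => ℂ) 2) (w : TreeV2) :
    (c • x) w = c * x w := by
  rw [lp.coeFn_smul]; rfl

lemma lp_add_apply (x y : lp (fun _ : TreeV2 => ℂ) 2) (w : TreeV2) :
    (x + y) w = x w + y w := by
  rw [lp.coeFn_add]; rfl

lemma lp_sub_apply (x y : lp (fun _ : TreeV2 => ℂ) 2) (w : TreeV2) :
    (x - y) w = x w - y w := by
  rw [lp.coeFn_sub]; rfl

lemma lp_zero_apply (w : TreeV2) : (0 : lp (fun _ : TreeV2 => ℂ) 2) w = 0 := by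
  rw [lp.coeFn_zero]; rfl

lemma eW_apply (v w : TreeV2) : (eW v) w = if w = v then 1 else 0 := by
  rcases eq_or_ne w v with rfl | h
  · rw [if_pos rfl, eW]; exact lp.single_apply_self 2 w 1
  · rw [if_neg h, eW]; exact lp.single_apply_ne 2 v 1 h

/-- The coefficient with which coordinate `(k, j+1)` feeds into coordinate `(k, j)` under `T`. -/
noncomputable def wcoef (μ2 : ℂ) (lam : ℕ+ → ℤ → ℂ) (k : ℕ+) (j : ℤ) : ℂ :=
  if j = 0 then μ2 else lam k (j + 1)

lemma wcoef_ne_zero (μ2 : ℂ) (lam : ℕ+ → ℤ → ℂ) (hμ2 : μ2 ≠ 0)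
    (hne : ∀ k j, lam k j ≠ 0) (k : ℕ+) (j : ℤ) : wcoef μ2 lam k j ≠ 0 := by
  unfold wcoef; split
  · exact hμ2
  · exact hne k _

/-- The coordinate evaluation as a continuous linear map on `ℓ²`. -/
noncomputable def coordCLM (w : TreeV2) : lp (fun _ : TreeV2 => ℂ) 2 →L[ℂ] ℂ :=
  LinearMap.mkContinuous
    { toFun := fun x => x w
      map_add' := fun x y => lp_add_apply x y w
      map_smul' := fun c x => lp_smul_apply c x w }
    1 (fun x => by
      simpa using lp.norm_apply_le_norm (by norm_num : (2 : ℝ≥0∞) ≠ 0) x w)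

lemma coordCLM_apply (w : TreeV2) (x : lp (fun _ : TreeV2 => ℂ) 2) :
    coordCLM w x = x w := rfl

/-- Coordinates of `T x` at branch points. -/
lemma Tcoord (μ1 μ2 : ℂ) (lam : ℕ+ → ℤ → ℂ)
    (T : lp (fun _ : TreeV2 => ℂ) 2 →L[ℂ] lp (fun _ : TreeV2 => ℂ) 2)
    (hspine : ∀ n : ℤ, T (eW (Sum.inl n)) = μ1 • eW (Sum.inl (n - 1)))
    (hbranch : ∀ (k : ℕ+) (j : ℤ), j ≠ 1 →
      T (eW (Sum.inr (k, j))) = lam k j • eW (Sum.inr (k, j - 1)))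
    (hjoin : ∀ k : ℕ+,
      T (eW (Sum.inr (k, 1))) = μ2 • (eW (Sum.inr (k, 0)) + eW (Sum.inl (-(k : ℤ)))))
    (x : lp (fun _ : TreeV2 => ℂ) 2) (k : ℕ+) (j : ℤ) :
    (T x) (Sum.inr (k, j)) = wcoef μ2 lam k j * x (Sum.inr (k, j + 1)) := by
  classical
  set t : TreeV2 := Sum.inr (k, j + 1) with ht
  have hx : HasSum (fun v : TreeV2 => lp.single 2 v (x v)) x :=
    lp.hasSum_single (by norm_num) x
  set Φ : lp (fun _ : TreeV2 => ℂ) 2 →L[ℂ] ℂ := (coordCLM (Sum.inr (k, j))).comp T with hΦ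
  have h2 : HasSum (fun v : TreeV2 => Φ (lp.single 2 v (x v))) (Φ x) := Φ.hasSum hx
  have hsingle : ∀ v : TreeV2, lp.single 2 v (x v) = x v • eW v := by
    intro v
    rw [eW, ← lp.single_smul]
    norm_num
  have hTe : ∀ v : TreeV2, (T (eW v)) (Sum.inr (k, j)) =
      if v = t then wcoef μ2 lam k j else 0 := by
    intro v
    match v with
    | Sum.inl n =>
      rw [hspine n, lp_smul_apply, eW_apply]
      simp [ht]
    | Sum.inr (k', j') =>
      by_cases h1 : j' = 1
      · subst h1
        rw [hjoin k', lp_smul_apply, lp_add_apply, eW_apply, eW_apply]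
        simp only [ht, Sum.inr.injEq, Prod.mk.injEq, reduceCtorEq, if_false, add_zero]
        split_ifs with hA hB hB
        · obtain ⟨rfl, rfl⟩ := hA
          simp [wcoef]
        · exact absurd ⟨hA.1.symm, by omega⟩ hB
        · exact absurd ⟨hB.1.symm, by omega⟩ hA
        · simp
      · rw [hbranch k' j' h1, lp_smul_apply, eW_apply]
        simp only [ht, Sum.inr.injEq, Prod.mk.injEq]
        split_ifs with hA hB hB
        · obtain ⟨rfl, hj⟩ := hA
          have hj' : j' = j + 1 := by omega
          subst hj'
          have h0 : j + 1 - 1 = j := by ring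
          rw [wcoef, if_neg (by omega : ¬ j = 0)]
          simp
        · exact absurd ⟨hA.1.symm, by omega⟩ hB
        · exact absurd ⟨hB.1.symm, by omega⟩ hA
        · simp
  have h3 : (fun v : TreeV2 => Φ (lp.single 2 v (x v)))
      = fun v => if v = t then wcoef μ2 lam k j * x t else 0 := by
    funext v
    have : Φ (lp.single 2 v (x v)) = x v * (T (eW v)) (Sum.inr (k, j)) := by
      rw [hsingle v, map_smul, hΦ, ContinuousLinearMap.comp_apply, coordCLM_apply]
      rfl
    rw [this, hTe v]
    rcases eq_or_ne v t with rfl | h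
    · rw [if_pos rfl, if_pos rfl, mul_comm]
    · rw [if_neg h, if_neg h, mul_zero]
  rw [h3] at h2
  have h4 : HasSum (fun v : TreeV2 => if v = t then wcoef μ2 lam k j * x t else 0)
      (wcoef μ2 lam k j * x t) := hasSum_ite_eq t _
  have := h2.unique h4
  exact this

/-- Abstract criterion: a sequence of Lipschitz functionals intertwined with `T`, with summable
Lipschitz constants and nonvanishing at `f`, rules out chain recurrence of `f`. -/
lemma abstract_not_chainrec {X : Type*} [NormedAddCommGroup X] [NormedSpace ℂ X]
    (T : X →L[ℂ] X) (f : X) (ψ : ℕ → X → ℂ) (C : ℕ → ℝ)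
    (hlip : ∀ n x y, ‖ψ n x - ψ n y‖ ≤ C n * ‖x - y‖)
    (hzero : ∀ n, ψ n 0 = 0)
    (hCnn : ∀ n, 0 ≤ C n)
    (hC : Summable C)
    (hT : (∀ n x, ψ n (T x) = ψ (n + 1) x) ∨ (∀ n x, ψ (n + 1) (T x) = ψ n x))
    (hne0 : ψ 0 f ≠ 0) : ¬ ChainRecVec T f := by
  intro hrec
  set S := ∑' n, C n with hS
  have hS0 : 0 ≤ S := tsum_nonneg hCnn
  set a := ‖ψ 0 f‖ with ha
  have ha0 : 0 < a := norm_pos_iff.mpr hne0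
  -- Main estimate along a δ-chain from f to f of length m
  have claimA : ∀ δ : ℝ, 0 < δ → ∀ m : ℕ, 1 ≤ m → ∀ u : ℕ → X, u 0 = f → u m = f →
      (∀ l, 1 ≤ l → l ≤ m → ‖u l - T (u (l - 1))‖ < δ) → a ≤ C m * ‖f‖ + δ * S := by
    intro δ hδ m hm u h0 hm' hstep
    have hψmf : ‖ψ m f‖ ≤ C m * ‖f‖ := by
      have := hlip m f 0
      rw [hzero m, sub_zero, sub_zero] at this
      exact this
    rcases hT with hT1 | hT2
    · -- forward intertwining
      have main : ∀ l, l ≤ m → ‖ψ (m - l) (u l) - ψ m (u 0)‖ ≤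
          δ * ∑ n ∈ Finset.Ico (m - l) m, C n := by
        intro l
        induction l with
        | zero =>
          intro _
          simp
        | succ l ih =>
          intro hl
          have hlm : l ≤ m := by omega
          have ihh := ih hlm
          have e1 : ψ (m - (l + 1)) (T (u l)) = ψ (m - l) (u l) := by
            have h : m - (l + 1) + 1 = m - l := by omega
            rw [hT1, h]
          have e2 : ‖ψ (m - (l + 1)) (u (l + 1)) - ψ (m - (l + 1)) (T (u l))‖ ≤
              C (m - (l + 1)) * δ := by
            refine le_trans (hlip _ _ _) ?_
            refine mul_le_mul_of_nonneg_left (le_of_lt ?_) (hCnn _)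
            simpa using hstep (l + 1) (by omega) hl
          have hsum : ∑ n ∈ Finset.Ico (m - (l + 1)) m, C n =
              C (m - (l + 1)) + ∑ n ∈ Finset.Ico (m - l) m, C n := by
            have h : m - (l + 1) + 1 = m - l := by omega
            rw [Finset.sum_eq_sum_Ico_succ_bot (by omega : m - (l + 1) < m), h]
          calc ‖ψ (m - (l + 1)) (u (l + 1)) - ψ m (u 0)‖
              ≤ ‖ψ (m - (l + 1)) (u (l + 1)) - ψ (m - (l + 1)) (T (u l))‖ +
                ‖ψ (m - (l + 1)) (T (u l)) - ψ m (u 0)‖ := norm_sub_le_norm_sub_add_norm_sub _ _ _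
            _ ≤ C (m - (l + 1)) * δ + δ * ∑ n ∈ Finset.Ico (m - l) m, C n := by
                refine add_le_add e2 ?_
                rw [e1]; exact ihh
            _ = δ * ∑ n ∈ Finset.Ico (m - (l + 1)) m, C n := by rw [hsum]; ring
      have hfin := main m le_rfl
      rw [Nat.sub_self, h0, hm'] at hfin
      have hsle : ∑ n ∈ Finset.Ico 0 m, C n ≤ S :=
        Summable.sum_le_tsum _ (fun n _ => hCnn n) hC
      have h1 : ‖ψ 0 f - ψ m f‖ ≤ δ * S :=
        hfin.trans (mul_le_mul_of_nonneg_left hsle (le_of_lt hδ))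
      calc a = ‖(ψ 0 f - ψ m f) + ψ m f‖ := by rw [sub_add_cancel]
        _ ≤ ‖ψ 0 f - ψ m f‖ + ‖ψ m f‖ := norm_add_le _ _
        _ ≤ δ * S + C m * ‖f‖ := add_le_add h1 hψmf
        _ = C m * ‖f‖ + δ * S := by ring
    · -- backward intertwining
      have main : ∀ l, l ≤ m → ‖ψ l (u l) - ψ 0 (u 0)‖ ≤
          δ * ∑ n ∈ Finset.range (l + 1), C n := by
        intro l
        induction l with
        | zero =>
          intro _
          simp only [sub_self, norm_zero]
          exact mul_nonneg (le_of_lt hδ) (Finset.sum_nonneg fun i _ => hCnn i)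
        | succ l ih =>
          intro hl
          have hlm : l ≤ m := by omega
          have ihh := ih hlm
          have e1 : ψ (l + 1) (T (u l)) = ψ l (u l) := hT2 l (u l)
          have e2 : ‖ψ (l + 1) (u (l + 1)) - ψ (l + 1) (T (u l))‖ ≤ C (l + 1) * δ := by
            refine le_trans (hlip _ _ _) ?_
            refine mul_le_mul_of_nonneg_left (le_of_lt ?_) (hCnn _)
            simpa using hstep (l + 1) (by omega) hl
          calc ‖ψ (l + 1) (u (l + 1)) - ψ 0 (u 0)‖
              ≤ ‖ψ (l + 1) (u (l + 1)) - ψ (l + 1) (T (u l))‖ +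
                ‖ψ (l + 1) (T (u l)) - ψ 0 (u 0)‖ := norm_sub_le_norm_sub_add_norm_sub _ _ _
            _ ≤ C (l + 1) * δ + δ * ∑ n ∈ Finset.range (l + 1), C n := by
                refine add_le_add e2 ?_
                rw [e1]; exact ihh
            _ = δ * ∑ n ∈ Finset.range (l + 1 + 1), C n := by
                conv_rhs => rw [Finset.sum_range_succ]
                ring
      have hfin := main m le_rfl
      rw [h0, hm'] at hfin
      have hsle : ∑ n ∈ Finset.range (m + 1), C n ≤ S :=
        Summable.sum_le_tsum _ (fun n _ => hCnn n) hC
      have h1 : ‖ψ 0 f - ψ m f‖ ≤ δ * S := by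
        rw [norm_sub_rev]
        exact hfin.trans (mul_le_mul_of_nonneg_left hsle (le_of_lt hδ))
      calc a = ‖(ψ 0 f - ψ m f) + ψ m f‖ := by rw [sub_add_cancel]
        _ ≤ ‖ψ 0 f - ψ m f‖ + ‖ψ m f‖ := norm_add_le _ _
        _ ≤ δ * S + C m * ‖f‖ := add_le_add h1 hψmf
        _ = C m * ‖f‖ + δ * S := by ring
  -- Choose δ small and a long chain
  have hδ0 : (0 : ℝ) < a / (2 * (S + 1)) := by positivity
  have htend : Filter.Tendsto (fun n => C n * ‖f‖) Filter.atTop (nhds 0) := by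
    simpa using hC.tendsto_atTop_zero.mul_const ‖f‖
  have hev : ∀ᶠ n in Filter.atTop, C n * ‖f‖ < a / 2 :=
    htend.eventually (gt_mem_nhds (by positivity))
  rcases Filter.eventually_atTop.1 hev with ⟨N, hN⟩
  obtain ⟨m, u, hm1, h0, hm', hstep⟩ := hrec _ hδ0
  -- repeat the chain to get a chain of length M = (N+1)*m
  set M := (N + 1) * m with hMdef
  have hMm : M = m * N + m := by rw [hMdef]; ring
  have hM1 : 1 ≤ M := by omega
  have hMN : N ≤ M := by
    have h1 : N ≤ m * N := Nat.le_mul_of_pos_left N (by omega)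
    omega
  set v : ℕ → X := fun l => if l = 0 then f else u ((l - 1) % m + 1) with hv
  have hv0 : v 0 = f := by simp [hv]
  have hvM : v M = f := by
    have h1 : M - 1 = m * N + (m - 1) := by omega
    have h2 : (m * N + (m - 1)) % m = m - 1 := by
      rw [Nat.mul_add_mod]
      exact Nat.mod_eq_of_lt (by omega)
    have h3 : v M = u ((M - 1) % m + 1) := if_neg (by omega)
    rw [h3, h1, h2]
    have h4 : m - 1 + 1 = m := by omega
    rw [h4, hm']
  have hvstep : ∀ l, 1 ≤ l → l ≤ M → ‖v l - T (v (l - 1))‖ < a / (2 * (S + 1)) := by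
    intro l hl _
    have hvl : v l = u ((l - 1) % m + 1) := if_neg (by omega)
    have hb : ∃ b, b ≤ m ∧ v (l - 1) = u b ∧ b % m = (l - 1) % m := by
      rcases Nat.eq_zero_or_pos (l - 1) with h | h
      · refine ⟨0, by omega, ?_, by rw [h]⟩
        rw [h, hv0, h0]
      · refine ⟨(l - 2) % m + 1, ?_, ?_, ?_⟩
        · have := Nat.mod_lt (l - 2) (show 0 < m by omega)
          omega
        · have h5 : v (l - 1) = u ((l - 1 - 1) % m + 1) := if_neg (by omega)
          rw [h5]
          have h6 : l - 1 - 1 = l - 2 := by omega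
          rw [h6]
        · have h2 : l - 1 = (l - 2) + 1 := by omega
          rw [h2]
          exact (Nat.mod_modEq (l - 2) m).add_right 1
    rcases hb with ⟨b, hbm, hvb, hbmod⟩
    rw [hvl, hvb]
    rcases eq_or_lt_of_le hbm with hbe | hblt
    · have hz : (l - 1) % m = 0 := by rw [← hbmod, hbe, Nat.mod_self]
      rw [hbe, hz, hm', ← h0]
      simpa using hstep 1 le_rfl hm1
    · have hbb : b % m = b := Nat.mod_eq_of_lt hblt
      rw [← hbmod, hbb]
      simpa using hstep (b + 1) (by omega) (by omega)
  have hfinal := claimA _ hδ0 M hM1 v hv0 hvM hvstep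
  have hCM : C M * ‖f‖ < a / 2 := hN M hMN
  have hδS : a / (2 * (S + 1)) * S ≤ a / 2 := by
    rw [div_mul_eq_mul_div, div_le_div_iff₀ (by positivity) (by norm_num)]
    nlinarith
  linarith


/-- Specialization of the abstract criterion to weighted coordinate functionals on `ℓ²(V)`. -/
lemma coord_not_chainrec (T : lp (fun _ : TreeV2 => ℂ) 2 →L[ℂ] lp (fun _ : TreeV2 => ℂ) 2)
    (f : lp (fun _ : TreeV2 => ℂ) 2) (c : ℕ → ℂ) (v : ℕ → TreeV2)
    (hCsum : Summable fun n => ‖c n‖)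
    (hT : (∀ (n : ℕ) (x : lp (fun _ : TreeV2 => ℂ) 2),
            c n * (T x) (v n) = c (n + 1) * x (v (n + 1))) ∨
          (∀ (n : ℕ) (x : lp (fun _ : TreeV2 => ℂ) 2),
            c (n + 1) * (T x) (v (n + 1)) = c n * x (v n)))
    (hne0 : c 0 * f (v 0) ≠ 0) : ¬ ChainRecVec T f := by
  refine abstract_not_chainrec T f (fun n x => c n * x (v n)) (fun n => ‖c n‖)
    ?_ ?_ (fun n => norm_nonneg _) hCsum ?_ hne0
  · intro n x y
    have h1 : c n * x (v n) - c n * y (v n) = c n * ((x - y) (v n)) := by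
      rw [lp_sub_apply]; ring
    rw [h1, norm_mul]
    exact mul_le_mul_of_nonneg_left
      (lp.norm_apply_le_norm (by norm_num : (2 : ℝ≥0∞) ≠ 0) (x - y) _) (norm_nonneg _)
  · intro n
    show c n * (0 : lp (fun _ : TreeV2 => ℂ) 2) (v n) = 0
    rw [lp_zero_apply, mul_zero]
  · rcases hT with h | h
    · exact Or.inl fun n x => h n x
    · exact Or.inr fun n x => h n x

theorem stmt_12 (μ1 μ2 : ℂ) (hμ1 : 1 < ‖μ1‖) (hμ12 : ‖μ1‖ < ‖μ2‖)
    (lam : ℕ+ → ℤ → ℂ) (hne : ∀ k j, lam k j ≠ 0)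
    (hbdd : ∃ c C : ℝ, 0 < c ∧ ∀ k j, c ≤ ‖lam k j‖ ∧ ‖lam k j‖ ≤ C)
    (T : lp (fun _ : TreeV2 => ℂ) 2 →L[ℂ] lp (fun _ : TreeV2 => ℂ) 2)
    (hspine : ∀ n : ℤ, T (eW (Sum.inl n)) = μ1 • eW (Sum.inl (n - 1)))
    (hbranch : ∀ (k : ℕ+) (j : ℤ), j ≠ 1 →
      T (eW (Sum.inr (k, j))) = lam k j • eW (Sum.inr (k, j - 1)))
    (hjoin : ∀ k : ℕ+,
      T (eW (Sum.inr (k, 1))) = μ2 • (eW (Sum.inr (k, 0)) + eW (Sum.inl (-(k : ℤ)))))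
    (k0 : ℕ+) (j0 : ℤ)
    (hsum : (Summable fun n : ℕ => ‖∏ i ∈ Finset.Icc (1 : ℤ) (n + 1 : ℕ), lam k0 i‖) ∨
            (Summable fun n : ℕ => ‖∏ i ∈ Finset.Icc (-(n : ℤ)) 0, lam k0 i‖⁻¹))
    (f : lp (fun _ : TreeV2 => ℂ) 2) (hf : f (Sum.inr (k0, j0)) ≠ 0) :
    ¬ ChainRecVec T f := by
  have hμ2 : μ2 ≠ 0 := by
    intro h
    rw [h, norm_zero] at hμ12
    linarith
  have hTc := Tcoord μ1 μ2 lam T hspine hbranch hjoin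
  have hW0 := wcoef_ne_zero μ2 lam hμ2 hne
  rcases hsum with hs1 | hs2
  · -- Case 1: forward products summable
    set c : ℕ → ℂ := fun n => ∏ i ∈ Finset.range n, wcoef μ2 lam k0 (j0 + (i : ℤ)) with hc
    have hcsucc : ∀ n, c (n + 1) = c n * wcoef μ2 lam k0 (j0 + (n : ℤ)) := by
      intro n
      simp only [hc]
      exact Finset.prod_range_succ _ n
    -- summability of ‖c n‖
    set P : ℕ → ℂ := fun n => ∏ i ∈ Finset.Icc (1 : ℤ) ((n : ℤ) + 1), lam k0 i with hP
    have hPsum : Summable fun n => ‖P n‖ := by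
      refine hs1.congr fun n => ?_
      simp only [hP]
      have harg : ((n + 1 : ℕ) : ℤ) = (n : ℤ) + 1 := by push_cast; ring
      rw [harg]
    have hPne : ∀ n, P n ≠ 0 := by
      intro n
      simp only [hP]
      exact Finset.prod_ne_zero_iff.mpr fun i _ => hne k0 i
    have hPsucc : ∀ n : ℕ, P (n + 1) = P n * lam k0 ((n : ℤ) + 2) := by
      intro n
      simp only [hP]
      have harg : (((n + 1 : ℕ) : ℤ) + 1) = (n : ℤ) + 2 := by push_cast; ring
      rw [harg]
      have hins : Finset.Icc (1 : ℤ) ((n : ℤ) + 2) =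
          insert ((n : ℤ) + 2) (Finset.Icc (1 : ℤ) ((n : ℤ) + 1)) := by
        ext i
        simp only [Finset.mem_Icc, Finset.mem_insert]
        omega
      rw [hins, Finset.prod_insert (by simp)]
      ring
    set n0 : ℕ := (1 - j0).toNat + 1 with hn0def
    have hn0 : 1 - j0 < (n0 : ℤ) := by
      rw [hn0def]
      push_cast
      have := Int.self_le_toNat (1 - j0)
      omega
    set d0 : ℕ := ((n0 : ℤ) + j0 - 1).toNat with hd0def
    have hd0 : (d0 : ℤ) = (n0 : ℤ) + j0 - 1 := by
      rw [hd0def]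
      exact Int.toNat_of_nonneg (by omega)
    have claim : ∀ n, c (n + n0) = (c n0 / P d0) * P (n + d0) := by
      intro n
      induction n with
      | zero =>
        simp only [Nat.zero_add]
        rw [div_mul_cancel₀ _ (hPne d0)]
      | succ n ih =>
        have e1 : c (n + 1 + n0) = c (n + n0) * wcoef μ2 lam k0 (j0 + ((n + n0 : ℕ) : ℤ)) := by
          have : n + 1 + n0 = (n + n0) + 1 := by omega
          rw [this, hcsucc]
        have e2 : wcoef μ2 lam k0 (j0 + ((n + n0 : ℕ) : ℤ)) = lam k0 (((n + d0 : ℕ) : ℤ) + 2) := by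
          rw [wcoef, if_neg (by push_cast; omega)]
          congr 1
          push_cast
          omega
        have e3 : P (n + d0 + 1) = P (n + d0) * lam k0 (((n + d0 : ℕ) : ℤ) + 2) := hPsucc (n + d0)
        have e4 : n + 1 + d0 = n + d0 + 1 := by omega
        rw [e1, e2, ih, e4, e3]
        ring
    have hCsum : Summable fun n => ‖c n‖ := by
      refine (summable_nat_add_iff (f := fun n => ‖c n‖) n0).1 ?_
      have h1 : Summable fun n => ‖P (n + d0)‖ :=
        (summable_nat_add_iff (f := fun n => ‖P n‖) d0).2 hPsum
      refine (h1.mul_left ‖c n0 / P d0‖).congr fun n => ?_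
      rw [claim n, norm_mul]
    -- apply the criterion
    refine coord_not_chainrec T f c (fun n => Sum.inr (k0, j0 + (n : ℤ))) hCsum (Or.inl ?_) ?_
    · intro n x
      show c n * (T x) (Sum.inr (k0, j0 + (n : ℤ)))
          = c (n + 1) * x (Sum.inr (k0, j0 + ((n + 1 : ℕ) : ℤ)))
      rw [hTc x k0 (j0 + (n : ℤ)), hcsucc n]
      have harg : j0 + ((n + 1 : ℕ) : ℤ) = j0 + (n : ℤ) + 1 := by push_cast; ring
      rw [harg]
      ring
    · show c 0 * f (Sum.inr (k0, j0 + ((0 : ℕ) : ℤ))) ≠ 0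
      have h1 : c 0 = 1 := by simp only [hc]; simp
      have h2 : j0 + ((0 : ℕ) : ℤ) = j0 := by push_cast; ring
      rw [h1, h2, one_mul]
      exact hf
  · -- Case 2: backward reciprocal products summable
    set D : ℕ → ℂ := fun n => ∏ i ∈ Finset.range n, wcoef μ2 lam k0 (j0 - (i : ℤ) - 1) with hD
    have hDsucc : ∀ n, D (n + 1) = D n * wcoef μ2 lam k0 (j0 - (n : ℤ) - 1) := by
      intro n
      simp only [hD]
      exact Finset.prod_range_succ _ n
    have hDne : ∀ n, D n ≠ 0 := by
      intro n
      simp only [hD]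
      exact Finset.prod_ne_zero_iff.mpr fun i _ => hW0 k0 _
    set c : ℕ → ℂ := fun n => (D n)⁻¹ with hc
    set Q : ℕ → ℂ := fun n => ∏ i ∈ Finset.Icc (-(n : ℤ)) 0, lam k0 i with hQ
    have hQsum : Summable fun n => ‖Q n‖⁻¹ := by
      refine hs2.congr fun n => ?_
      simp only [hQ]
    have hQne : ∀ n, Q n ≠ 0 := by
      intro n
      simp only [hQ]
      exact Finset.prod_ne_zero_iff.mpr fun i _ => hne k0 i
    have hQsucc : ∀ n : ℕ, Q (n + 1) = lam k0 (-((n : ℤ) + 1)) * Q n := by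
      intro n
      simp only [hQ]
      have hins : Finset.Icc (-((n + 1 : ℕ) : ℤ)) 0 =
          insert (-((n : ℤ) + 1)) (Finset.Icc (-(n : ℤ)) 0) := by
        ext i
        simp only [Finset.mem_Icc, Finset.mem_insert]
        push_cast
        omega
      rw [hins, Finset.prod_insert (by simp)]
    set n0 : ℕ := (j0 + 1).toNat + 1 with hn0def
    have hn0 : j0 + 1 < (n0 : ℤ) := by
      rw [hn0def]
      push_cast
      have := Int.self_le_toNat (j0 + 1)
      omega
    set d0 : ℕ := ((n0 : ℤ) - j0 - 1).toNat with hd0def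
    have hd0 : (d0 : ℤ) = (n0 : ℤ) - j0 - 1 := by
      rw [hd0def]
      exact Int.toNat_of_nonneg (by omega)
    have claim : ∀ n, D (n + n0) = (D n0 / Q d0) * Q (n + d0) := by
      intro n
      induction n with
      | zero =>
        simp only [Nat.zero_add]
        rw [div_mul_cancel₀ _ (hQne d0)]
      | succ n ih =>
        have e1 : D (n + 1 + n0) = D (n + n0) * wcoef μ2 lam k0 (j0 - ((n + n0 : ℕ) : ℤ) - 1) := by
          have : n + 1 + n0 = (n + n0) + 1 := by omega
          rw [this, hDsucc]
        have e2 : wcoef μ2 lam k0 (j0 - ((n + n0 : ℕ) : ℤ) - 1) =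
            lam k0 (-(((n + d0 : ℕ) : ℤ) + 1)) := by
          rw [wcoef, if_neg (by push_cast; omega)]
          congr 1
          push_cast
          omega
        have e3 : Q (n + d0 + 1) = lam k0 (-(((n + d0 : ℕ) : ℤ) + 1)) * Q (n + d0) :=
          hQsucc (n + d0)
        have e4 : n + 1 + d0 = n + d0 + 1 := by omega
        rw [e1, e2, ih, e4, e3]
        ring
    have hCsum : Summable fun n => ‖c n‖ := by
      refine (summable_nat_add_iff (f := fun n => ‖c n‖) n0).1 ?_
      have h1 : Summable fun n => ‖Q (n + d0)‖⁻¹ :=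
        (summable_nat_add_iff (f := fun n => ‖Q n‖⁻¹) d0).2 hQsum
      refine (h1.mul_left ‖D n0 / Q d0‖⁻¹).congr fun n => ?_
      simp only [hc]
      rw [claim n, mul_inv, norm_mul, norm_inv, norm_inv]
    refine coord_not_chainrec T f c (fun n => Sum.inr (k0, j0 - (n : ℤ))) hCsum (Or.inr ?_) ?_
    · intro n x
      show c (n + 1) * (T x) (Sum.inr (k0, j0 - ((n + 1 : ℕ) : ℤ)))
          = c n * x (Sum.inr (k0, j0 - (n : ℤ)))
      rw [hTc x k0 (j0 - ((n + 1 : ℕ) : ℤ))]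
      have h1 : j0 - ((n + 1 : ℕ) : ℤ) = j0 - (n : ℤ) - 1 := by push_cast; ring
      have h2 : j0 - (n : ℤ) - 1 + 1 = j0 - (n : ℤ) := by ring
      rw [h1, h2]
      have h3 : c (n + 1) * wcoef μ2 lam k0 (j0 - (n : ℤ) - 1) = c n := by
        simp only [hc]
        rw [hDsucc n, mul_inv, mul_assoc, inv_mul_cancel₀ (hW0 k0 (j0 - (n : ℤ) - 1)), mul_one]
      calc c (n + 1) * (wcoef μ2 lam k0 (j0 - (n : ℤ) - 1) * x (Sum.inr (k0, j0 - (n : ℤ))))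
          = (c (n + 1) * wcoef μ2 lam k0 (j0 - (n : ℤ) - 1)) * x (Sum.inr (k0, j0 - (n : ℤ))) := by
            ring
        _ = c n * x (Sum.inr (k0, j0 - (n : ℤ))) := by rw [h3]
    · show c 0 * f (Sum.inr (k0, j0 - ((0 : ℕ) : ℤ))) ≠ 0
      have h1 : c 0 = 1 := by simp only [hc, hD]; simp
      have h2 : j0 - ((0 : ℕ) : ℤ) = j0 := by push_cast; ring
      rw [h1, h2, one_mul]
      exact hf
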